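/- arXiv:2101.07068 — 4 statements merged into one kernel-verified Lean document; each statement's English description precedes it below -/
import Mathlib

section
/- Let n ≥ 2 be an integer, ε > 0, δ > 0, c ∈ ℝ, and a > 1. Suppose w : ℝ → ℝ is such that the function v(R) := R^{1−n} w(R) is continuously differentiable on [a, ∞) with v'(R) = c·R^{-n} + o(R^{-n-ε}) as R → ∞, and suppose w(R) = o(R^{1−δ}) as R → ∞. Then w(R) + c/(n−1) = o(R^{-ε}) as R → ∞; i.e. w converges to the constant −c/(n−1) with rate o(R^{-ε}). (This is the order-n induction step for the good field with the flat wave operator: the equation 2R^n ∇_ψ(R^{1−n}∇_T 𝒢_n) ≃ source determines 𝒢_n up to o⁺(1) from the previous order.) -/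
open Filter MeasureTheory Set Asymptotics Topology

/-!
Write `v R = R^(1-n) w R`. Since `w = o(R^(1-δ))` and `n ≥ 2`, `v → 0`, so the fundamental
theorem of calculus on `(R, ∞)` gives `-v R = ∫_R^∞ v' = c R^(1-n)/(n-1) + ∫_R^∞ g` with
`g = v' - c t^(-n) = o(t^(-n-ε))`. The tail integral of `g` is `o(R^(1-n-ε))`, and multiplying
by `R^(n-1)` yields `w R + c/(n-1) = o(R^(-ε))`. Replacing `v'` by `deriv v`, which is always
measurable, makes `g` integrable near infinity from its decay alone.
-/

namespace Asymptotics

theorem IsLittleO.rpow_mul_atTop {f : ℝ → ℝ} {b : ℝ} (h : f =o[atTop] (· ^ b)) (a : ℝ) :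
    (fun R => R ^ a * f R) =o[atTop] (· ^ (a + b)) := by
  refine ((isBigO_refl (· ^ a) atTop).mul_isLittleO h).congr' EventuallyEq.rfl ?_
  filter_upwards [eventually_gt_atTop 0] with R hR
  rw [Real.rpow_add hR]

theorem IsBigO.eventually_integrableOn_Ioi {E : Type*} [NormedAddCommGroup E] {f : ℝ → E}
    {p : ℝ} (hp : p < -1) (hfm : StronglyMeasurableAtFilter f atTop)
    (hf : f =O[atTop] (· ^ p)) : ∀ᶠ R in atTop, IntegrableOn f (Ioi R) := by
  obtain ⟨b, hb⟩ := integrableAtFilter_atTop_iff.mp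
    (hf.integrableAtFilter hfm (integrableAtFilter_rpow_atTop_iff.mpr hp))
  filter_upwards [eventually_ge_atTop b] with R hR
  exact hb.mono_set fun t ht => hR.trans (le_of_lt ht)

theorem IsLittleO.integral_Ioi_rpow {E : Type*} [NormedAddCommGroup E] [NormedSpace ℝ E]
    {f : ℝ → E} {p : ℝ} (hp : p < -1) (hf : f =o[atTop] (· ^ p)) :
    (fun R => ∫ t in Ioi R, f t) =o[atTop] (· ^ (p + 1)) := by
  rw [isLittleO_iff]
  intro η hη
  have hk : 0 < -(p + 1) := by linarith
  obtain ⟨b, hb⟩ := eventually_atTop.mp (hf.def (mul_pos hη hk))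
  filter_upwards [eventually_ge_atTop b, eventually_gt_atTop 0] with R hRb hR
  have hbound : ∀ᵐ t ∂volume.restrict (Ioi R), ‖f t‖ ≤ η * -(p + 1) * t ^ p := by
    refine (ae_restrict_iff' measurableSet_Ioi).2 (ae_of_all _ fun t ht => ?_)
    have ht0 : 0 < t := hR.trans ht
    simpa [Real.norm_eq_abs, abs_of_nonneg (Real.rpow_nonneg ht0.le _)] using
      hb t (hRb.trans ht.le)
  calc ‖∫ t in Ioi R, f t‖ ≤ ∫ t in Ioi R, η * -(p + 1) * t ^ p :=
        norm_integral_le_of_norm_le ((integrableOn_Ioi_rpow_of_lt hp hR).const_mul _) hbound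
    _ = η * ‖R ^ (p + 1)‖ := by
        rw [integral_const_mul, integral_Ioi_rpow_of_lt hp hR, Real.norm_eq_abs,
          abs_of_nonneg (Real.rpow_nonneg hR.le _)]
        field_simp [show p + 1 ≠ 0 by linarith]

end Asymptotics

theorem integral_Ioi_sub_const_mul_rpow_of_hasDerivAt {f f' : ℝ → ℝ} {c p R : ℝ}
    (hp : p < -1) (hR : 0 < R) (hf : ∀ t ∈ Ici R, HasDerivAt f (f' t) t)
    (hf_tendsto : Tendsto f atTop (𝓝 0))
    (hint : IntegrableOn (fun t => f' t - c * t ^ p) (Ioi R)) :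
    ∫ t in Ioi R, (f' t - c * t ^ p) = -f R + c * R ^ (p + 1) / (p + 1) := by
  have hpow : IntegrableOn (fun t => c * t ^ p) (Ioi R) :=
    (integrableOn_Ioi_rpow_of_lt hp hR).const_mul c
  have hf' : IntegrableOn f' (Ioi R) :=
    (hint.add hpow).congr_fun (fun t _ => sub_add_cancel _ _) measurableSet_Ioi
  have hftc : ∫ t in Ioi R, f' t = -f R := by
    simpa using integral_Ioi_of_hasDerivAt_of_tendsto' hf hf' hf_tendsto
  rw [integral_sub hf' hpow, hftc, integral_const_mul, integral_Ioi_rpow_of_lt hp hR]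
  ring

theorem good_field_induction_step_general (n : ℕ) (hn : 2 ≤ n) (ε δ c a : ℝ)
    (hε : 0 < ε) (hδ : 0 < δ) (w v' : ℝ → ℝ)
    (hv : ∀ R ∈ Ici a, HasDerivAt (fun R : ℝ => R ^ (1 - (n : ℝ)) * w R) (v' R) R)
    (ho : (fun R : ℝ => v' R - c * R ^ (-(n : ℝ)))
        =o[atTop] fun R : ℝ => R ^ (-(n : ℝ) - ε))
    (hw : w =o[atTop] fun R : ℝ => R ^ (1 - δ)) :
    (fun R : ℝ => w R + c / ((n : ℝ) - 1)) =o[atTop] fun R : ℝ => R ^ (-ε) := by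
  have hn' : (2 : ℝ) ≤ n := by exact_mod_cast hn
  set v : ℝ → ℝ := fun R => R ^ (1 - (n : ℝ)) * w R
  set g : ℝ → ℝ := fun R => deriv v R - c * R ^ (-(n : ℝ))
  have hv_tendsto : Tendsto v atTop (𝓝 0) :=
    (hw.rpow_mul_atTop _).trans_tendsto
      (by convert tendsto_rpow_neg_atTop (y := n + δ - 2) (by linarith) using 3; ring)
  have hg : g =o[atTop] (· ^ (-(n : ℝ) - ε)) := by
    refine ho.congr' ?_ EventuallyEq.rfl
    filter_upwards [eventually_ge_atTop a] with R hR
    simp only [g, (hv R hR).deriv]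
  have hp : -(n : ℝ) - ε < -1 := by linarith
  have hg_int : ∀ᶠ R in atTop, IntegrableOn g (Ioi R) :=
    hg.isBigO.eventually_integrableOn_Ioi hp
      ((measurable_deriv v).sub (measurable_const.mul (measurable_id.pow_const _))
        ).stronglyMeasurable.stronglyMeasurableAtFilter
  have hw_eq : (fun R => w R + c / ((n : ℝ) - 1)) =ᶠ[atTop]
      fun R => -(R ^ ((n : ℝ) - 1) * ∫ t in Ioi R, g t) := by
    filter_upwards [hg_int, eventually_ge_atTop a, eventually_gt_atTop 0] with R hgR hRa hR
    rw [integral_Ioi_sub_const_mul_rpow_of_hasDerivAt (by linarith) hR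
      (fun t ht => (hv t (hRa.trans ht)).differentiableAt.hasDerivAt) hv_tendsto hgR]
    have hinv : R ^ ((n : ℝ) - 1) * R ^ (1 - (n : ℝ)) = 1 := by
      rw [← Real.rpow_add hR]; simp
    rw [show -(n : ℝ) + 1 = 1 - n by ring]
    field_simp [v, show (n : ℝ) - 1 ≠ 0 by linarith, show 1 - (n : ℝ) ≠ 0 by linarith]
    linear_combination ((n : ℝ) - 1) * (((n : ℝ) - 1) * w R + c) * hinv
  refine ((hg.integral_Ioi_rpow hp).rpow_mul_atTop ((n : ℝ) - 1)).neg_left.congr' hw_eq.symm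
    (.of_forall fun R => ?_)
  ring_nf

/-- Order-`n` induction step for the good field with the flat wave operator.
Let `n ≥ 2`, `ε, δ > 0`, `c ∈ ℝ`, `a > 1`.  If `v(R) := R^{1−n} w(R)` is continuously
differentiable on `[a, ∞)` with `v'(R) = c R^{-n} + o(R^{-n-ε})` as `R → ∞`, and
`w(R) = o(R^{1−δ})`, then `w(R) + c/(n−1) = o(R^{-ε})`, i.e. `w` converges to `−c/(n−1)`
with rate `o(R^{-ε})`. -/
theorem good_field_induction_step (n : ℕ) (hn : 2 ≤ n) (ε δ c a : ℝ)
    (hε : 0 < ε) (hδ : 0 < δ) (ha : 1 < a) (w v' : ℝ → ℝ)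
    (hv : ∀ R ∈ Ici a, HasDerivAt (fun R : ℝ => R ^ (1 - (n : ℝ)) * w R) (v' R) R)
    (hc : ContinuousOn v' (Ici a))
    (ho : (fun R : ℝ => v' R - c * R ^ (-(n : ℝ)))
        =o[atTop] fun R : ℝ => R ^ (-(n : ℝ) - ε))
    (hw : w =o[atTop] fun R : ℝ => R ^ (1 - δ)) :
    (fun R : ℝ => w R + c / ((n : ℝ) - 1)) =o[atTop] fun R : ℝ => R ^ (-ε) :=
  good_field_induction_step_general n hn ε δ c a hε hδ w v' hv ho hw
end

section
/- Let n ≥ 2 be an integer, ε > 0, δ > 0, α, β ∈ ℝ, and a > 1. Suppose w : ℝ → ℝ is such that v(R) := R^{1−n} w(R) is continuously differentiable on [a, ∞) with v'(R) = (α + β·log R)·R^{-n} + o(R^{-n-ε}) as R → ∞, and suppose w(R) = o(R^{1−δ}) as R → ∞. Then w(R) + α/(n−1) + β/(n−1)² + (β/(n−1))·log R = o(R^{-ε}) as R → ∞; i.e. w(R) = A + B·log R + o(R^{-ε}) with A = −α/(n−1) − β/(n−1)² and B = −β/(n−1). (This is the order-n induction step for the bad and ugly fields with the flat wave operator: a source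 carrying one power of log R at order R^{-n} produces exactly one power of log R in the order-n coefficient, with the stated coefficients.) -/
/-!
With `k = n - 1`, `q(R) = R^{-k} (α/k + β/k² + (β/k) log R)` satisfies
`q' = -(α + β log R) R^{-n}`, so `g = R^{-k} w + q = R^{-k} (w + α/k + β/k² + (β/k) log R)`
has `g' = o(R^{-n-ε})`. Both `R^{-k} w` and `q` vanish at infinity, hence so does `g`. For each
`c > 0`, `±g - c R^{1-n-ε}` is eventually monotone (its derivative is `≥ 0`) and tends to `0`, so it
is `≤ 0`; thus `g = o(R^{1-n-ε})`, and multiplying by `R^k` gives the claim.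
-/

open Filter Set Asymptotics Topology Real

theorem le_of_tendsto_zero_of_deriv_le {f f' G G' : ℝ → ℝ} {a : ℝ}
    (hf : ∀ x ∈ Ici a, HasDerivAt f (f' x) x) (hG : ∀ x ∈ Ici a, HasDerivAt G (G' x) x)
    (hle : ∀ x ∈ Ici a, G' x ≤ f' x) (hf0 : Tendsto f atTop (𝓝 0))
    (hG0 : Tendsto G atTop (𝓝 0)) : ∀ x ∈ Ici a, f x ≤ G x := by
  intro x hx
  have hderiv : ∀ y ∈ Ici a, HasDerivAt (fun y => f y - G y) (f' y - G' y) y :=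
    fun y hy => (hf y hy).sub (hG y hy)
  have hmono : MonotoneOn (fun y => f y - G y) (Ici a) :=
    monotoneOn_of_hasDerivWithinAt_nonneg (convex_Ici a) (HasDerivAt.continuousOn hderiv)
      (fun y hy => (hderiv y (interior_subset hy)).hasDerivWithinAt)
      (fun y hy => sub_nonneg.2 (hle y (interior_subset hy)))
  have hlim : Tendsto (fun y => f y - G y) atTop (𝓝 0) := by simpa using hf0.sub hG0
  have := ge_of_tendsto hlim (eventually_atTop.2 ⟨x, fun y hy => hmono hx (le_trans hx hy) hy⟩)
  linarith

theorem isLittleO_rpow_add_one_of_deriv_isLittleO {g g' : ℝ → ℝ} {r : ℝ} (hr : r < -1)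
    (hg : ∀ᶠ R in atTop, HasDerivAt g (g' R) R) (hg0 : Tendsto g atTop (𝓝 0))
    (hg' : g' =o[atTop] fun R => R ^ r) : g =o[atTop] fun R => R ^ (r + 1) := by
  rw [isLittleO_iff]
  intro c hc
  have hs : 0 < -(r + 1) := by linarith
  obtain ⟨R₀, hR₀⟩ := eventually_atTop.1
    ((hg.and (hg'.def (mul_pos hc hs))).and (eventually_gt_atTop 0))
  let G : ℝ → ℝ := fun R => c * R ^ (r + 1)
  have hG : ∀ R ∈ Ici R₀, HasDerivAt G (c * ((r + 1) * R ^ r)) R := fun R hR => by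
    simpa using (hasDerivAt_rpow_const (p := r + 1) (Or.inl (hR₀ R hR).2.ne')).const_mul c
  have hG0 : Tendsto G atTop (𝓝 0) := by
    simpa using (tendsto_rpow_neg_atTop hs).const_mul c
  have hbound : ∀ R ∈ Ici R₀, |g' R| ≤ -(c * ((r + 1) * R ^ r)) := fun R hR => by
    have h := (hR₀ R hR).1.2
    rw [norm_eq_abs, norm_of_nonneg (rpow_pos_of_pos (hR₀ R hR).2 r).le] at h
    linarith
  have hupper : ∀ R ∈ Ici R₀, g R ≤ G R :=
    le_of_tendsto_zero_of_deriv_le (fun R hR => (hR₀ R hR).1.1) hG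
      (fun R hR => by linarith [hbound R hR, neg_abs_le (g' R)]) hg0 hG0
  have hlower : ∀ R ∈ Ici R₀, -g R ≤ G R :=
    le_of_tendsto_zero_of_deriv_le (fun R hR => (hR₀ R hR).1.1.neg) hG
      (fun R hR => by linarith [hbound R hR, le_abs_self (g' R)]) (by simpa using hg0.neg) hG0
  filter_upwards [eventually_ge_atTop R₀] with R hR
  rw [norm_eq_abs, norm_of_nonneg (rpow_pos_of_pos (hR₀ R hR).2 _).le, abs_le]
  constructor <;> linarith [hupper R hR, hlower R hR]

theorem tendsto_rpow_mul_of_isLittleO_rpow {f : ℝ → ℝ} {b c : ℝ} (hbc : c + b ≤ 0)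
    (hf : f =o[atTop] fun R => R ^ b) : Tendsto (fun R => R ^ c * f R) atTop (𝓝 0) := by
  have hbounded : (fun R : ℝ => R ^ c * R ^ b) =O[atTop] fun _ => (1 : ℝ) := by
    refine IsBigO.of_bound 1 ?_
    filter_upwards [eventually_ge_atTop 1] with R hR
    rw [← rpow_add (by linarith), norm_of_nonneg (by positivity), norm_one, one_mul]
    exact rpow_le_one_of_one_le_of_nonpos hR hbc
  exact (isLittleO_one_iff ℝ).1 (((isBigO_refl _ _).mul_isLittleO hf).trans_isBigO hbounded)

theorem isLittleO_const_add_mul_log_rpow {p : ℝ} (hp : 0 < p) (A B : ℝ) :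
    (fun R => A + B * log R) =o[atTop] fun R => R ^ p :=
  (isLittleO_const_left.2 (Or.inr (tendsto_norm_atTop_atTop.comp (tendsto_rpow_atTop hp)))).add
    ((isLittleO_log_rpow_atTop hp).const_mul_left B)

theorem hasDerivAt_rpow_one_sub_mul_log_primitive {k : ℝ} (hk : k ≠ 1) (α β : ℝ) {R : ℝ}
    (hR : 0 < R) :
    HasDerivAt (fun R => R ^ (1 - k) * (α / (k - 1) + β / (k - 1) ^ 2 + β / (k - 1) * log R))
      (-((α + β * log R) * R ^ (-k))) R := by
  have hk' : k - 1 ≠ 0 := sub_ne_zero.2 hk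
  refine ((hasDerivAt_rpow_const (p := 1 - k) (Or.inl hR.ne')).mul
    (((hasDerivAt_log hR.ne').const_mul (β / (k - 1))).const_add
      (α / (k - 1) + β / (k - 1) ^ 2))).congr_deriv ?_
  rw [show 1 - k - 1 = -k by ring, show 1 - k = -k + 1 by ring, rpow_add hR, rpow_one]
  field_simp
  ring

theorem bad_ugly_field_induction_step_general (n : ℕ) (hn : 2 ≤ n) (ε δ α β a : ℝ)
    (hε : 0 < ε) (hδ : 0 < δ) (w v' : ℝ → ℝ)
    (hv : ∀ R ∈ Ici a, HasDerivAt (fun R : ℝ => R ^ (1 - (n : ℝ)) * w R) (v' R) R)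
    (ho : (fun R : ℝ => v' R - (α + β * Real.log R) * R ^ (-(n : ℝ)))
        =o[atTop] fun R : ℝ => R ^ (-(n : ℝ) - ε))
    (hw : w =o[atTop] fun R : ℝ => R ^ (1 - δ)) :
    (fun R : ℝ => w R + α / ((n : ℝ) - 1) + β / ((n : ℝ) - 1) ^ 2 +
        (β / ((n : ℝ) - 1)) * Real.log R)
      =o[atTop] fun R : ℝ => R ^ (-ε) := by
  have hn' : (2 : ℝ) ≤ n := by exact_mod_cast hn
  let g : ℝ → ℝ := fun R => R ^ (1 - (n : ℝ)) * (w R + α / ((n : ℝ) - 1) +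
    β / ((n : ℝ) - 1) ^ 2 + β / ((n : ℝ) - 1) * log R)
  have hg : ∀ᶠ R in atTop, HasDerivAt g (v' R - (α + β * log R) * R ^ (-(n : ℝ))) R := by
    filter_upwards [eventually_ge_atTop a, eventually_gt_atTop 0] with R ha hR
    refine (((hv R ha).add (hasDerivAt_rpow_one_sub_mul_log_primitive (k := n) (by linarith)
      α β hR)).congr_deriv (by ring)).congr_of_eventuallyEq (.of_forall fun R => ?_)
    simp only [g, Pi.add_apply]
    ring
  have hg0 : Tendsto g atTop (𝓝 0) := by
    have hsum := (tendsto_rpow_mul_of_isLittleO_rpow (c := 1 - n) (by linarith) hw).add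
      (tendsto_rpow_mul_of_isLittleO_rpow (c := 1 - n) (by linarith)
        (isLittleO_const_add_mul_log_rpow (p := n - 1) (by linarith)
          (α / ((n : ℝ) - 1) + β / ((n : ℝ) - 1) ^ 2) (β / ((n : ℝ) - 1))))
    rw [add_zero] at hsum
    refine hsum.congr fun R => ?_
    simp only [g]
    ring
  have hgo : g =o[atTop] fun R => R ^ (-(n : ℝ) - ε + 1) :=
    isLittleO_rpow_add_one_of_deriv_isLittleO (by linarith) hg hg0 ho
  refine ((isBigO_refl (fun R => R ^ ((n : ℝ) - 1)) atTop).mul_isLittleO hgo).congr' ?_ ?_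
  all_goals filter_upwards [eventually_gt_atTop 0] with R hR
  · rw [← mul_assoc, ← rpow_add hR, show (n : ℝ) - 1 + (1 - n) = 0 by ring, rpow_zero, one_mul]
  · rw [← rpow_add hR]
    ring_nf

/-- Order-`n` induction step for the bad and ugly fields with the flat wave operator.
Let `n ≥ 2`, `ε, δ > 0`, `α, β ∈ ℝ`, `a > 1`.  If `v(R) := R^{1−n} w(R)` is continuously
differentiable on `[a, ∞)` with `v'(R) = (α + β log R) R^{-n} + o(R^{-n-ε})` as `R → ∞`,
and `w(R) = o(R^{1−δ})`, then
`w(R) + α/(n−1) + β/(n−1)² + (β/(n−1)) log R = o(R^{-ε})`,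
i.e. `w(R) = A + B log R + o(R^{-ε})` with `A = −α/(n−1) − β/(n−1)²`, `B = −β/(n−1)`. -/
theorem bad_ugly_field_induction_step (n : ℕ) (hn : 2 ≤ n) (ε δ α β a : ℝ)
    (hε : 0 < ε) (hδ : 0 < δ) (ha : 1 < a) (w v' : ℝ → ℝ)
    (hv : ∀ R ∈ Ici a, HasDerivAt (fun R : ℝ => R ^ (1 - (n : ℝ)) * w R) (v' R) R)
    (hc : ContinuousOn v' (Ici a))
    (ho : (fun R : ℝ => v' R - (α + β * Real.log R) * R ^ (-(n : ℝ)))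
        =o[atTop] fun R : ℝ => R ^ (-(n : ℝ) - ε))
    (hw : w =o[atTop] fun R : ℝ => R ^ (1 - δ)) :
    (fun R : ℝ => w R + α / ((n : ℝ) - 1) + β / ((n : ℝ) - 1) ^ 2 +
        (β / ((n : ℝ) - 1)) * Real.log R)
      =o[atTop] fun R : ℝ => R ^ (-ε) :=
  bad_ugly_field_induction_step_general n hn ε δ α β a hε hδ w v' hv ho hw
end

section
/- Let n ≥ 2 be an integer, P a natural number, c_0, …, c_P ∈ ℝ, ε > 0, δ > 0, and a > 1. Suppose w : ℝ → ℝ is such that v(R) := R^{1−n} w(R) is continuously differentiable on [a, ∞) with v'(R) = Σ_{p=0}^{P} c_p (log R)^p R^{-n} + o(R^{-n-ε}) as R → ∞, and suppose w(R) = o(R^{1−δ}) as R → ∞. Then, setting d_i := −Σ_{p=i}^{P} (p!/i!)·c_p/(n−1)^{p−i+1} for 0 ≤ i ≤ P, one has w(R) − Σ_{i=0}^{P} d_i (log R)^i = o(R^{-ε}) as R → ∞. (This is the order-n induction step for all three fields with a general asymptotically flat wave operator: a polyhomogeneous source Σ_p (log R)^p Ω_{n−1,p} at order R^{-n−1} determines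 an order-n coefficient that is a polynomial of the same degree in log R, with the stated coefficients.) -/
/-!
Write `m = n - 1`. The polynomial `Q(L) = ∑ dᵢ Lⁱ` solves `-m Q + Q' = ∑ cₚ Lᵖ`, so
`R^(-m) Q(log R)` is an exact antiderivative of the polyhomogeneous part of `v'`. Hence
`g = v - R^(-m) Q(log R)` has `g' = o(R^(-(m+ε)-1))`, and `g → 0` because `w = o(R^(1-δ))`.
A function vanishing at infinity whose derivative is `o(R^(-s-1))` is `o(R^(-s))`: the functions
`C R^(-s) ∓ g` are eventually antitone and tend to `0`, hence are nonnegative.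
Multiplying by `R^m` gives the claim.
-/

open Filter Set Asymptotics Topology Finset Real

lemma nonneg_of_hasDerivAt_nonpos_of_tendsto_zero {f f' : ℝ → ℝ} {R₀ : ℝ}
    (hf : ∀ t ∈ Ici R₀, HasDerivAt f (f' t) t) (hf' : ∀ t ∈ Ici R₀, f' t ≤ 0)
    (hlim : Tendsto f atTop (𝓝 0)) {R : ℝ} (hR : R₀ ≤ R) : 0 ≤ f R := by
  have hanti : AntitoneOn f (Ici R₀) :=
    antitoneOn_of_hasDerivWithinAt_nonpos (convex_Ici R₀)
      (fun t ht => (hf t ht).continuousAt.continuousWithinAt)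
      (fun t ht => (hf t (interior_subset ht)).hasDerivWithinAt)
      (fun t ht => hf' t (interior_subset ht))
  exact le_of_tendsto hlim <| (eventually_ge_atTop R).mono fun S hS =>
    hanti hR (hR.trans hS) hS

theorem isLittleO_rpow_neg_of_hasDerivAt {g g' : ℝ → ℝ} {s : ℝ} (hs : 0 < s)
    (hderiv : ∀ᶠ R in atTop, HasDerivAt g (g' R) R) (hg : Tendsto g atTop (𝓝 0))
    (hg' : g' =o[atTop] fun R => R ^ (-s - 1)) : g =o[atTop] fun R => R ^ (-s) := by
  rw [isLittleO_iff]
  intro C hC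
  obtain ⟨R₀, hR₀⟩ := eventually_atTop.1 <| hderiv.and <| (eventually_gt_atTop 0).and <|
    isLittleO_iff.1 hg' (mul_pos hs hC)
  filter_upwards [eventually_ge_atTop R₀] with R hR
  have hpos : 0 < R := (hR₀ R hR).2.1
  have hbarrier : ∀ t ∈ Ici R₀,
      HasDerivAt (fun t => C * t ^ (-s)) (C * (-s * t ^ (-s - 1))) t := fun t ht =>
    (hasDerivAt_rpow_const (Or.inl (hR₀ t ht).2.1.ne')).const_mul C
  have hbound : ∀ t ∈ Ici R₀, |g' t| ≤ s * C * t ^ (-s - 1) := fun t ht => by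
    have h := (hR₀ t ht).2.2
    rwa [Real.norm_eq_abs, Real.norm_of_nonneg (rpow_nonneg (hR₀ t ht).2.1.le _)] at h
  have hlim : Tendsto (fun t => C * t ^ (-s)) atTop (𝓝 0) := by
    simpa using (tendsto_rpow_neg_atTop hs).const_mul C
  have upper := nonneg_of_hasDerivAt_nonpos_of_tendsto_zero
    (fun t ht => (hbarrier t ht).fun_sub (hR₀ t ht).1)
    (fun t ht => by linarith [abs_le.1 (hbound t ht)]) (by simpa using hlim.sub hg) hR
  have lower := nonneg_of_hasDerivAt_nonpos_of_tendsto_zero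
    (fun t ht => (hbarrier t ht).fun_add (hR₀ t ht).1)
    (fun t ht => by linarith [abs_le.1 (hbound t ht)]) (by simpa using hlim.add hg) hR
  rw [Real.norm_eq_abs, Real.norm_of_nonneg (rpow_nonneg hpos.le _), abs_le]
  constructor <;> linarith

/-- The coefficients of the unique polynomial solution `Q(L) = ∑ dᵢ Lⁱ` of
`-m Q + Q' = ∑_{p ≤ P} cₚ Lᵖ`. -/
noncomputable def logPolyCoeff (m : ℝ) (P : ℕ) (c : ℕ → ℝ) (i : ℕ) : ℝ :=
  -∑ p ∈ Icc i P, (p.factorial : ℝ) / (i.factorial : ℝ) * c p / m ^ (p - i + 1)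

section logPolyCoeff

variable {m : ℝ} {P : ℕ} {c : ℕ → ℝ}

lemma logPolyCoeff_of_lt {i : ℕ} (h : P < i) : logPolyCoeff m P c i = 0 := by
  simp [logPolyCoeff, Finset.Icc_eq_empty_of_lt h]

lemma neg_mul_logPolyCoeff_add (hm : m ≠ 0) {j : ℕ} (hj : j ≤ P) :
    -m * logPolyCoeff m P c j + (j + 1) * logPolyCoeff m P c (j + 1) = c j := by
  have hjf : (j.factorial : ℝ) ≠ 0 := Nat.cast_ne_zero.2 j.factorial_ne_zero
  have hhead : -m * logPolyCoeff m P c j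
      = ∑ p ∈ Icc j P, (p.factorial : ℝ) / j.factorial * c p / m ^ (p - j) := by
    rw [logPolyCoeff, neg_mul_neg, mul_sum]
    refine sum_congr rfl fun p _ => ?_
    rw [pow_succ]
    field_simp
  have htail : (j + 1) * logPolyCoeff m P c (j + 1)
      = -∑ p ∈ Icc (j + 1) P, (p.factorial : ℝ) / j.factorial * c p / m ^ (p - j) := by
    rw [logPolyCoeff, mul_neg, mul_sum]
    refine congrArg _ (sum_congr rfl fun p hp => ?_)
    rw [show p - (j + 1) + 1 = p - j by have := (mem_Icc.1 hp).1; omega, Nat.factorial_succ]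
    push_cast
    field_simp
  rw [hhead, htail, ← Finset.insert_Icc_add_one_left_eq_Icc hj, sum_insert (by simp)]
  simp [hjf]

lemma neg_mul_sum_logPolyCoeff_add_sum (hm : m ≠ 0) (L : ℝ) :
    -m * ∑ i ∈ range (P + 1), logPolyCoeff m P c i * L ^ i
      + ∑ i ∈ range (P + 1), i * logPolyCoeff m P c i * L ^ (i - 1)
      = ∑ p ∈ range (P + 1), c p * L ^ p := by
  have hshift : ∑ i ∈ range (P + 1), i * logPolyCoeff m P c i * L ^ (i - 1)
      = ∑ i ∈ range (P + 1), (i + 1) * logPolyCoeff m P c (i + 1) * L ^ i := by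
    rw [sum_range_succ', sum_range_succ (fun i => ((i : ℝ) + 1) * _ * _),
      logPolyCoeff_of_lt (Nat.lt_succ_self P)]
    simp
  rw [hshift, mul_sum, ← sum_add_distrib]
  refine sum_congr rfl fun i hi => ?_
  rw [← neg_mul_logPolyCoeff_add (c := c) hm (Nat.lt_succ_iff.1 (mem_range.1 hi))]
  ring

lemma hasDerivAt_rpow_neg_mul_sum_logPolyCoeff (hm : m ≠ 0) {R : ℝ} (hR : 0 < R) :
    HasDerivAt (fun R => R ^ (-m) * ∑ i ∈ range (P + 1), logPolyCoeff m P c i * log R ^ i)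
      ((∑ p ∈ range (P + 1), c p * log R ^ p) * R ^ (-m - 1)) R := by
  have hQ : HasDerivAt (fun R => ∑ i ∈ range (P + 1), logPolyCoeff m P c i * log R ^ i)
      (∑ i ∈ range (P + 1), i * logPolyCoeff m P c i * log R ^ (i - 1) * R⁻¹) R :=
    HasDerivAt.fun_sum fun i _ =>
      (((hasDerivAt_log hR.ne').pow i).const_mul _).congr_deriv (by ring)
  refine ((hasDerivAt_rpow_const (p := -m) (Or.inl hR.ne')).mul hQ).congr_deriv ?_
  rw [← neg_mul_sum_logPolyCoeff_add_sum (c := c) hm, ← sum_mul, rpow_sub_one hR.ne']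
  ring

end logPolyCoeff

lemma Asymptotics.IsLittleO.rpow_mul_atTop_s10 {f : ℝ → ℝ} {t : ℝ} (s : ℝ)
    (h : f =o[atTop] fun R => R ^ t) :
    (fun R => R ^ s * f R) =o[atTop] fun R => R ^ (s + t) :=
  ((isBigO_refl (fun R : ℝ => R ^ s) atTop).mul_isLittleO h).congr' .rfl <|
    (eventually_gt_atTop 0).mono fun _ hR => (rpow_add hR s t).symm

lemma Asymptotics.IsLittleO.tendsto_zero_of_rpow_neg {f : ℝ → ℝ} {s : ℝ} (hs : s < 0)
    (h : f =o[atTop] fun R => R ^ s) : Tendsto f atTop (𝓝 0) :=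
  h.trans_tendsto (by simpa using tendsto_rpow_neg_atTop (neg_pos.2 hs))

lemma tendsto_rpow_neg_mul_sum_log_pow {m : ℝ} (hm : 0 < m) (d : ℕ → ℝ) (s : Finset ℕ) :
    Tendsto (fun R => R ^ (-m) * ∑ i ∈ s, d i * log R ^ i) atTop (𝓝 0) := by
  simp_rw [mul_sum]
  rw [← sum_const_zero (s := s)]
  refine tendsto_finsetSum s fun i _ => ?_
  have hlog : (fun R => d i * log R ^ i) =o[atTop] fun R => R ^ (m / 2) := by
    simpa [rpow_natCast] using
      (isLittleO_log_rpow_rpow_atTop (i : ℝ) (half_pos hm)).const_mul_left (d i)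
  exact (hlog.rpow_mul_atTop_s10 (-m)).tendsto_zero_of_rpow_neg (by linarith)

theorem general_induction_step_general (n : ℕ) (hn : 2 ≤ n) (P : ℕ) (c : ℕ → ℝ) (ε δ a : ℝ)
    (hε : 0 < ε) (hδ : 0 < δ) (w v' : ℝ → ℝ)
    (hv : ∀ R ∈ Ici a, HasDerivAt (fun R : ℝ => R ^ (1 - (n : ℝ)) * w R) (v' R) R)
    (ho : (fun R : ℝ =>
        v' R - (∑ p ∈ Finset.range (P + 1), c p * (Real.log R) ^ p) * R ^ (-(n : ℝ)))
        =o[atTop] fun R : ℝ => R ^ (-(n : ℝ) - ε))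
    (hw : w =o[atTop] fun R : ℝ => R ^ (1 - δ)) :
    (fun R : ℝ => w R - ∑ i ∈ Finset.range (P + 1),
        (-(∑ p ∈ Finset.Icc i P,
            (p.factorial : ℝ) / (i.factorial : ℝ) * c p / ((n : ℝ) - 1) ^ (p - i + 1))) *
          (Real.log R) ^ i)
      =o[atTop] fun R : ℝ => R ^ (-ε) := by
  set m : ℝ := n - 1 with hm_def
  have hm : 1 ≤ m := by
    have : (2 : ℝ) ≤ n := by exact_mod_cast hn
    linarith
  set Q : ℝ → ℝ := fun R => ∑ i ∈ range (P + 1), logPolyCoeff m P c i * log R ^ i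
  have hderiv : ∀ᶠ R in atTop, HasDerivAt (fun R => R ^ (-m) * w R - R ^ (-m) * Q R)
      (v' R - (∑ p ∈ range (P + 1), c p * log R ^ p) * R ^ (-m - 1)) R := by
    filter_upwards [eventually_ge_atTop a, eventually_gt_atTop 0] with R ha hR
    have hvR := hv R ha
    have hpart := hasDerivAt_rpow_neg_mul_sum_logPolyCoeff (c := c) (P := P)
      (by linarith : m ≠ 0) hR
    rw [show 1 - (n : ℝ) = -m by rw [hm_def]; ring] at hvR
    rw [show -m - 1 = -n by rw [hm_def]; ring] at hpart ⊢
    exact hvR.fun_sub hpart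
  have hlim : Tendsto (fun R => R ^ (-m) * w R - R ^ (-m) * Q R) atTop (𝓝 0) := by
    simpa using ((hw.rpow_mul_atTop_s10 (-m)).tendsto_zero_of_rpow_neg (by linarith)).sub
      (tendsto_rpow_neg_mul_sum_log_pow (by linarith) _ _)
  have hdecay := isLittleO_rpow_neg_of_hasDerivAt (s := m + ε) (by linarith) hderiv hlim
    (by rwa [show -(m + ε) - 1 = -n - ε by rw [hm_def]; ring,
      show -m - 1 = -n by rw [hm_def]; ring])
  refine (hdecay.rpow_mul_atTop_s10 m).congr' ?_ (by simp)
  filter_upwards [eventually_gt_atTop 0] with R hR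
  rw [← mul_sub, ← mul_assoc, ← rpow_add hR, add_neg_cancel, rpow_zero, one_mul]
  rfl

/-- Order-`n` induction step for all three fields with a general asymptotically flat wave
operator.  Let `n ≥ 2`, `P ∈ ℕ`, `c_0, …, c_P ∈ ℝ`, `ε, δ > 0`, `a > 1`.  If
`v(R) := R^{1−n} w(R)` is continuously differentiable on `[a, ∞)` with
`v'(R) = Σ_{p=0}^{P} c_p (log R)^p R^{-n} + o(R^{-n-ε})` as `R → ∞`, and
`w(R) = o(R^{1−δ})`, then with `d_i := −Σ_{p=i}^{P} (p!/i!) c_p/(n−1)^{p−i+1}` one has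
`w(R) − Σ_{i=0}^{P} d_i (log R)^i = o(R^{-ε})` as `R → ∞`. -/
theorem general_induction_step (n : ℕ) (hn : 2 ≤ n) (P : ℕ) (c : ℕ → ℝ) (ε δ a : ℝ)
    (hε : 0 < ε) (hδ : 0 < δ) (ha : 1 < a) (w v' : ℝ → ℝ)
    (hv : ∀ R ∈ Ici a, HasDerivAt (fun R : ℝ => R ^ (1 - (n : ℝ)) * w R) (v' R) R)
    (hc : ContinuousOn v' (Ici a))
    (ho : (fun R : ℝ =>
        v' R - (∑ p ∈ Finset.range (P + 1), c p * (Real.log R) ^ p) * R ^ (-(n : ℝ)))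
        =o[atTop] fun R : ℝ => R ^ (-(n : ℝ) - ε))
    (hw : w =o[atTop] fun R : ℝ => R ^ (1 - δ)) :
    (fun R : ℝ => w R - ∑ i ∈ Finset.range (P + 1),
        (-(∑ p ∈ Finset.Icc i P,
            (p.factorial : ℝ) / (i.factorial : ℝ) * c p / ((n : ℝ) - 1) ^ (p - i + 1))) *
          (Real.log R) ^ i)
      =o[atTop] fun R : ℝ => R ^ (-ε) :=
  general_induction_step_general n hn P c ε δ a hε hδ w v' hv ho hw
end

section
/- Let n ≥ 2 be an integer, ε > 0, a > 1, and let γ : ℝ³ → ℝ be analytic in a neighborhood of the origin with γ(0,0,0) = 0. For i = 1, 2, 3 let φ_i : ℝ → ℝ admit truncated polyhomogeneous expansions φ_i(R) = Σ_{m=1}^{n−1} Σ_{k=0}^{m} a^{(i)}_{m,k} (log R)^k R^{-m} + ρ_i(R) on [a, ∞), where a^{(i)}_{m,k} ∈ ℝ and ρ_i(R) = o(R^{-(n−1)-ε}) as R → ∞ (in particular each φ_i(R) → 0 as R → ∞). Then there exist real coefficients Γ_{m,k} (1 ≤ m ≤ n−1, 0 ≤ k ≤ m) and ε' > 0 such that,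 as R → ∞, γ(φ_1(R), φ_2(R), φ_3(R)) = Σ_{m=1}^{n−1} Σ_{k=0}^{m} Γ_{m,k} (log R)^k R^{-m} + o(R^{-(n−1)-ε'}). (Any analytic function of the three evolved fields that vanishes at null infinity inherits a truncated polyhomogeneous expansion of the same form; this is the key fact used for the metric functions γ(g,b,u) of an asymptotically flat metric.) -/
open Filter Set Asymptotics Topology

/-!
The functions with a truncated polyhomogeneous expansion of order `n - 1` form a class closed
under sums, scalar multiples and products: the product of two terms `(log R)^k R^(-m)` is again
such a term, and the terms with `m ≥ n` are absorbed into the remainder. When `n ≥ 2` these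
functions are `o(R^s)` for every `s > -1`. Expanding `γ` at the origin to order `n`, the Taylor
polynomial evaluated at `(φ₁, φ₂, φ₃)` has no constant term, so it lies in the class, while the
Taylor remainder is `O(‖φ‖^n) = o(R^(-(n-1) - 1/2))`.
-/

noncomputable def polyhomSum (n : ℕ) (Γ : ℕ → ℕ → ℝ) (R : ℝ) : ℝ :=
  ∑ m ∈ Finset.Icc 1 (n - 1), ∑ k ∈ Finset.range (m + 1),
    Γ m k * (Real.log R) ^ k * R ^ (-(m : ℝ))

def HasPolyhomExpansion (n : ℕ) (f : ℝ → ℝ) : Prop :=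
  ∃ Γ : ℕ → ℕ → ℝ, ∃ ε' > (0 : ℝ),
    (fun R : ℝ => f R - polyhomSum n Γ R) =o[atTop] fun R : ℝ => R ^ (-((n : ℝ) - 1) - ε')

theorem isBigO_rpow_rpow_atTop_of_le {s t : ℝ} (h : s ≤ t) :
    (fun R : ℝ => R ^ s) =O[atTop] fun R : ℝ => R ^ t := by
  refine Eventually.isBigO ?_
  filter_upwards [eventually_ge_atTop 1] with R hR
  rw [Real.norm_of_nonneg (Real.rpow_nonneg (zero_le_one.trans hR) s)]
  exact Real.rpow_le_rpow_of_exponent_le hR h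

theorem isLittleO_log_pow_mul_rpow_atTop (k : ℕ) {m s : ℝ} (h : -m < s) :
    (fun R : ℝ => Real.log R ^ k * R ^ (-m)) =o[atTop] fun R : ℝ => R ^ s := by
  have hlog : (fun R : ℝ => Real.log R ^ k) =o[atTop] fun R : ℝ => R ^ (s + m) := by
    simpa only [Real.rpow_natCast] using isLittleO_log_rpow_rpow_atTop k (by linarith)
  refine (hlog.mul_isBigO (isBigO_refl (fun R : ℝ => R ^ (-m)) atTop)).congr' .rfl ?_
  filter_upwards [eventually_gt_atTop 0] with R hR
  rw [← Real.rpow_add hR, add_neg_cancel_right]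

theorem Asymptotics.IsLittleO.norm_pow_rpow {E : Type*} [NormedAddCommGroup E] {f : ℝ → E} {s : ℝ}
    (h : f =o[atTop] fun R : ℝ => R ^ s) {k : ℕ} (hk : 0 < k) :
    (fun R => ‖f R‖ ^ k) =o[atTop] fun R : ℝ => R ^ (k * s) := by
  refine (h.norm_left.pow hk).congr' .rfl ?_
  filter_upwards [eventually_ge_atTop 0] with R hR
  rw [mul_comm, Real.rpow_mul hR, Real.rpow_natCast]

theorem isLittleO_polyhomSum {n : ℕ} (Γ : ℕ → ℕ → ℝ) {s : ℝ} (hs : -1 < s) :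
    polyhomSum n Γ =o[atTop] fun R : ℝ => R ^ s := by
  refine IsLittleO.fun_sum fun m hm => IsLittleO.fun_sum fun k _ => ?_
  have hm1 : (1 : ℝ) ≤ m := by exact_mod_cast (Finset.mem_Icc.1 hm).1
  simpa only [mul_assoc] using
    (isLittleO_log_pow_mul_rpow_atTop k (by linarith : -(m : ℝ) < s)).const_mul_left (Γ m k)

theorem tendsto_zero_of_isLittleO_rpow {E : Type*} [NormedAddCommGroup E] {f : ℝ → E} {s : ℝ}
    (hs : s < 0)
    (h : f =o[atTop] fun R : ℝ => R ^ s) : Tendsto f atTop (𝓝 0) :=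
  h.trans_tendsto (by simpa using tendsto_rpow_neg_atTop (neg_pos.2 hs))

namespace HasPolyhomExpansion

variable {n : ℕ} {f g : ℝ → ℝ}

theorem congr' (h : f =ᶠ[atTop] g) (hf : HasPolyhomExpansion n f) : HasPolyhomExpansion n g := by
  obtain ⟨Γ, ε', hε', ho⟩ := hf
  exact ⟨Γ, ε', hε', ho.congr' (by filter_upwards [h] with R hR; rw [hR]) .rfl⟩

theorem of_isLittleO {ε' : ℝ} (hε' : 0 < ε')
    (h : f =o[atTop] fun R : ℝ => R ^ (-((n : ℝ) - 1) - ε')) : HasPolyhomExpansion n f :=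
  ⟨0, ε', hε', by simpa [polyhomSum] using h⟩

theorem of_eventuallyEq_add {Γ : ℕ → ℕ → ℝ} {ρ : ℝ → ℝ} {ε' : ℝ} (hε' : 0 < ε')
    (h : ∀ᶠ R in atTop, f R = polyhomSum n Γ R + ρ R)
    (hρ : ρ =o[atTop] fun R : ℝ => R ^ (-((n : ℝ) - 1) - ε')) : HasPolyhomExpansion n f :=
  ⟨Γ, ε', hε', hρ.congr' (by filter_upwards [h] with R hR; rw [hR, add_sub_cancel_left]) .rfl⟩

theorem zero : HasPolyhomExpansion n fun _ => 0 :=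
  of_isLittleO one_pos (isLittleO_zero _ _)

theorem add (hf : HasPolyhomExpansion n f) (hg : HasPolyhomExpansion n g) :
    HasPolyhomExpansion n fun R => f R + g R := by
  obtain ⟨Γ₁, ε₁, hε₁, h₁⟩ := hf
  obtain ⟨Γ₂, ε₂, hε₂, h₂⟩ := hg
  refine ⟨Γ₁ + Γ₂, min ε₁ ε₂, lt_min hε₁ hε₂, ?_⟩
  have hsum : ∀ R, polyhomSum n (Γ₁ + Γ₂) R = polyhomSum n Γ₁ R + polyhomSum n Γ₂ R := by
    intro R
    simp only [polyhomSum, Pi.add_apply, add_mul, Finset.sum_add_distrib]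
  refine ((h₁.trans_isBigO (isBigO_rpow_rpow_atTop_of_le ?_)).add
    (h₂.trans_isBigO (isBigO_rpow_rpow_atTop_of_le ?_))).congr' ?_ .rfl
  · linarith [min_le_left ε₁ ε₂]
  · linarith [min_le_right ε₁ ε₂]
  · filter_upwards with R
    rw [hsum]
    ring

theorem const_mul (c : ℝ) (hf : HasPolyhomExpansion n f) :
    HasPolyhomExpansion n fun R => c * f R := by
  obtain ⟨Γ, ε', hε', h⟩ := hf
  refine ⟨c • Γ, ε', hε', (h.const_mul_left c).congr' ?_ .rfl⟩
  filter_upwards with R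
  simp only [polyhomSum, Pi.smul_apply, smul_eq_mul, mul_sub, Finset.mul_sum, mul_assoc]

theorem sum {ι : Type*} (s : Finset ι) {F : ι → ℝ → ℝ}
    (h : ∀ i ∈ s, HasPolyhomExpansion n (F i)) : HasPolyhomExpansion n fun R => ∑ i ∈ s, F i R := by
  induction s using Finset.cons_induction with
  | empty => simpa using zero
  | cons i s hi ih =>
    simp only [Finset.sum_cons]
    exact add (h i (Finset.mem_cons_self i s)) (ih fun j hj => h j (Finset.mem_cons_of_mem hj))

theorem monomial {m k : ℕ} (hm : 1 ≤ m) (hk : k ≤ m) (b : ℝ) :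
    HasPolyhomExpansion n fun R => b * Real.log R ^ k * R ^ (-(m : ℝ)) := by
  by_cases hmn : m ≤ n - 1
  · refine ⟨fun m' k' => if m' = m ∧ k' = k then b else 0, 1, one_pos, ?_⟩
    have hsum : ∀ R : ℝ, polyhomSum n (fun m' k' => if m' = m ∧ k' = k then b else 0) R
        = b * Real.log R ^ k * R ^ (-(m : ℝ)) := by
      intro R
      rw [polyhomSum, Finset.sum_eq_single_of_mem m (Finset.mem_Icc.2 ⟨hm, hmn⟩)
        fun m' _ hm' => Finset.sum_eq_zero fun k' _ => by simp [hm'],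
        Finset.sum_eq_single_of_mem k (Finset.mem_range.2 (Nat.lt_succ_of_le hk))
        fun k' _ hk' => by simp [hk']]
      simp
    simpa only [hsum, sub_self] using isLittleO_zero _ _
  · have hnm : (n : ℝ) ≤ m := by exact_mod_cast (by omega : n ≤ m)
    refine of_isLittleO (ε' := 1 / 2) one_half_pos ?_
    simpa only [mul_assoc] using
      (isLittleO_log_pow_mul_rpow_atTop k (by linarith : -(m : ℝ) < _)).const_mul_left b

theorem polyhomSum_mul_polyhomSum (Γ₁ Γ₂ : ℕ → ℕ → ℝ) :
    HasPolyhomExpansion n fun R => polyhomSum n Γ₁ R * polyhomSum n Γ₂ R := by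
  simp only [polyhomSum, Finset.sum_mul_sum]
  refine sum _ fun m hm => sum _ fun m' hm' => sum _ fun k hk => sum _ fun k' hk' => ?_
  have hk : k ≤ m := Nat.lt_succ_iff.1 (Finset.mem_range.1 hk)
  have hk' : k' ≤ m' := Nat.lt_succ_iff.1 (Finset.mem_range.1 hk')
  refine (monomial (m := m + m') (k := k + k') (by grind) (by omega) (Γ₁ m k * Γ₂ m' k')).congr' ?_
  filter_upwards [eventually_gt_atTop 0] with R hR
  rw [Nat.cast_add, neg_add, Real.rpow_add hR, pow_add]
  ring

theorem isLittleO_rpow (hn : 2 ≤ n) (hf : HasPolyhomExpansion n f) {s : ℝ} (hs : -1 < s) :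
    f =o[atTop] fun R : ℝ => R ^ s := by
  obtain ⟨Γ, ε', hε', h⟩ := hf
  have hn' : (2 : ℝ) ≤ n := by exact_mod_cast hn
  have hrem := h.trans_isBigO (isBigO_rpow_rpow_atTop_of_le (by linarith : _ ≤ s))
  simpa only [sub_add_cancel] using hrem.add (isLittleO_polyhomSum (n := n) Γ hs)

theorem tendsto_zero (hn : 2 ≤ n) (hf : HasPolyhomExpansion n f) : Tendsto f atTop (𝓝 0) :=
  tendsto_zero_of_isLittleO_rpow (by norm_num) (hf.isLittleO_rpow hn (s := -1 / 2) (by norm_num))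

theorem mul (hn : 2 ≤ n) (hf : HasPolyhomExpansion n f) (hg : HasPolyhomExpansion n g) :
    HasPolyhomExpansion n fun R => f R * g R := by
  have hg_bdd := (hg.tendsto_zero hn).isBigO_one ℝ
  obtain ⟨Γ₁, ε₁, hε₁, h₁⟩ := hf
  obtain ⟨Γ₂, ε₂, hε₂, h₂⟩ := hg
  have hP_bdd := (tendsto_zero_of_isLittleO_rpow (by norm_num)
    (isLittleO_polyhomSum (n := n) Γ₁ (s := -1 / 2) (by norm_num))).isBigO_one ℝ
  have h₁g := of_isLittleO hε₁ (by simpa only [mul_one] using h₁.mul_isBigO hg_bdd)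
  have hP₂ := of_isLittleO hε₂ (by simpa only [one_mul] using hP_bdd.mul_isLittleO h₂)
  refine ((polyhomSum_mul_polyhomSum Γ₁ Γ₂).add (h₁g.add hP₂)).congr' ?_
  filter_upwards with R
  ring

theorem prod {ι : Type*} (hn : 2 ≤ n) {s : Finset ι} (hs : s.Nonempty) {F : ι → ℝ → ℝ}
    (h : ∀ i ∈ s, HasPolyhomExpansion n (F i)) :
    HasPolyhomExpansion n fun R => ∏ i ∈ s, F i R := by
  induction hs using Finset.Nonempty.cons_induction with
  | singleton i => simpa using h i (Finset.mem_singleton_self i)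
  | cons i s hi _ ih =>
    simp only [Finset.prod_cons]
    exact mul hn (h i (Finset.mem_cons_self i s)) (ih fun j hj => h j (Finset.mem_cons_of_mem hj))

end HasPolyhomExpansion

section Analytic

variable {E ι : Type*} [NormedAddCommGroup E] [NormedSpace ℝ E] [Fintype ι] {n : ℕ}

theorem isLittleO_sum_smul {α : Type*} {l : Filter α} {g : α → ℝ} {c : ι → α → ℝ} (e : ι → E)
    (h : ∀ i, c i =o[l] g) : (fun x => ∑ i, c i x • e i) =o[l] g :=
  IsLittleO.fun_sum fun i _ =>
    (isBigO_of_le' (c := ‖e i‖) l fun x => by rw [norm_smul, mul_comm]).trans_isLittleO (h i)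

theorem HasPolyhomExpansion.multilinear_apply (hn : 2 ≤ n) {k : ℕ}
    (q : ContinuousMultilinearMap ℝ (fun _ : Fin (k + 1) => E) ℝ) (e : ι → E) {c : ι → ℝ → ℝ}
    (hc : ∀ i, HasPolyhomExpansion n (c i)) :
    HasPolyhomExpansion n fun R => q fun _ => ∑ i, c i R • e i := by
  classical
  simp only [q.map_sum, q.map_smul_univ, smul_eq_mul]
  refine HasPolyhomExpansion.sum _ fun r _ => ?_
  simpa only [mul_comm] using (HasPolyhomExpansion.prod hn Finset.univ_nonempty
    fun i _ => hc (r i)).const_mul (q fun i => e (r i))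

theorem HasPolyhomExpansion.analyticAt_comp (hn : 2 ≤ n) {γ : E → ℝ} (hγ : AnalyticAt ℝ γ 0)
    (hγ0 : γ 0 = 0) (e : ι → E) {c : ι → ℝ → ℝ} (hc : ∀ i, HasPolyhomExpansion n (c i)) :
    HasPolyhomExpansion n fun R => γ (∑ i, c i R • e i) := by
  obtain ⟨p, hp⟩ := hγ
  set φ : ℝ → E := fun R => ∑ i, c i R • e i
  have hn' : (2 : ℝ) ≤ n := by exact_mod_cast hn
  set s : ℝ := (-((n : ℝ) - 1) - 1 / 2) / n
  have hφ : φ =o[atTop] fun R : ℝ => R ^ s := isLittleO_sum_smul e fun i =>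
    (hc i).isLittleO_rpow hn (by rw [lt_div_iff₀ (by positivity)]; linarith)
  have htaylor : (fun R => γ (φ R) - p.partialSum n (φ R)) =O[atTop] fun R => ‖φ R‖ ^ n := by
    have hφ0 := tendsto_zero_of_isLittleO_rpow
      (div_neg_of_neg_of_pos (by linarith) (by positivity)) hφ
    simpa only [Function.comp_def, zero_add] using
      (hp.isBigO_sub_partialSum_pow n).comp_tendsto hφ0
  have hpow : (fun R => ‖φ R‖ ^ n) =o[atTop] fun R : ℝ => R ^ (-((n : ℝ) - 1) - 1 / 2) := by
    simpa only [s, mul_div_cancel₀ _ (by positivity : (n : ℝ) ≠ 0)] using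
      hφ.norm_pow_rpow (k := n) (by omega)
  have hpartial : HasPolyhomExpansion n fun R => p.partialSum n (φ R) := by
    refine HasPolyhomExpansion.sum _ fun m _ => ?_
    cases m with
    | zero => simpa only [hp.coeff_zero, hγ0] using HasPolyhomExpansion.zero
    | succ k => exact .multilinear_apply hn (p (k + 1)) e hc
  refine (hpartial.add (.of_isLittleO one_half_pos (htaylor.trans_isLittleO hpow))).congr' ?_
  filter_upwards with R
  rw [add_sub_cancel]

end Analytic

theorem analytic_inherits_polyhomogeneous_general (n : ℕ) (hn : 2 ≤ n) (ε a : ℝ)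
    (hε : 0 < ε)
    (γ : ℝ × ℝ × ℝ → ℝ) (hγ : AnalyticAt ℝ γ (0, 0, 0)) (hγ0 : γ (0, 0, 0) = 0)
    (φ₁ φ₂ φ₃ : ℝ → ℝ) (a₁ a₂ a₃ : ℕ → ℕ → ℝ) (ρ₁ ρ₂ ρ₃ : ℝ → ℝ)
    (h₁ : ∀ R ∈ Ici a, φ₁ R =
      (∑ m ∈ Finset.Icc 1 (n - 1), ∑ k ∈ Finset.range (m + 1),
        a₁ m k * (Real.log R) ^ k * R ^ (-(m : ℝ))) + ρ₁ R)
    (h₂ : ∀ R ∈ Ici a, φ₂ R =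
      (∑ m ∈ Finset.Icc 1 (n - 1), ∑ k ∈ Finset.range (m + 1),
        a₂ m k * (Real.log R) ^ k * R ^ (-(m : ℝ))) + ρ₂ R)
    (h₃ : ∀ R ∈ Ici a, φ₃ R =
      (∑ m ∈ Finset.Icc 1 (n - 1), ∑ k ∈ Finset.range (m + 1),
        a₃ m k * (Real.log R) ^ k * R ^ (-(m : ℝ))) + ρ₃ R)
    (hρ₁ : ρ₁ =o[atTop] fun R : ℝ => R ^ (-((n : ℝ) - 1) - ε))
    (hρ₂ : ρ₂ =o[atTop] fun R : ℝ => R ^ (-((n : ℝ) - 1) - ε))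
    (hρ₃ : ρ₃ =o[atTop] fun R : ℝ => R ^ (-((n : ℝ) - 1) - ε)) :
    ∃ Γ : ℕ → ℕ → ℝ, ∃ ε' > (0 : ℝ),
      (fun R : ℝ => γ (φ₁ R, φ₂ R, φ₃ R) -
          ∑ m ∈ Finset.Icc 1 (n - 1), ∑ k ∈ Finset.range (m + 1),
            Γ m k * (Real.log R) ^ k * R ^ (-(m : ℝ)))
        =o[atTop] fun R : ℝ => R ^ (-((n : ℝ) - 1) - ε') := by
  have hφ : ∀ i, HasPolyhomExpansion n (![φ₁, φ₂, φ₃] i) := by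
    intro i
    fin_cases i
    · exact .of_eventuallyEq_add hε ((eventually_ge_atTop a).mono h₁) hρ₁
    · exact .of_eventuallyEq_add hε ((eventually_ge_atTop a).mono h₂) hρ₂
    · exact .of_eventuallyEq_add hε ((eventually_ge_atTop a).mono h₃) hρ₃
  have hγφ := HasPolyhomExpansion.analyticAt_comp hn hγ hγ0 ![(1, 0, 0), (0, 1, 0), (0, 0, 1)] hφ
  simp only [Fin.sum_univ_three, Matrix.cons_val_zero, Matrix.cons_val_one, Matrix.cons_val,
    Prod.smul_mk, smul_eq_mul, mul_one, mul_zero, Prod.mk_add_mk, add_zero, zero_add] at hγφ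
  exact hγφ

/-- Any analytic function `γ(g,b,u)` of the three evolved fields, vanishing at the origin
(i.e. at null infinity), inherits a truncated polyhomogeneous expansion of the same form:
if each `φ_i` admits a truncated polyhomogeneous expansion to order `n−1` with at most `m`
powers of `log R` at order `R^{-m}`, then so does `R ↦ γ(φ₁(R), φ₂(R), φ₃(R))`. -/
theorem analytic_inherits_polyhomogeneous (n : ℕ) (hn : 2 ≤ n) (ε a : ℝ)
    (hε : 0 < ε) (ha : 1 < a)
    (γ : ℝ × ℝ × ℝ → ℝ) (hγ : AnalyticAt ℝ γ (0, 0, 0)) (hγ0 : γ (0, 0, 0) = 0)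
    (φ₁ φ₂ φ₃ : ℝ → ℝ) (a₁ a₂ a₃ : ℕ → ℕ → ℝ) (ρ₁ ρ₂ ρ₃ : ℝ → ℝ)
    (h₁ : ∀ R ∈ Ici a, φ₁ R =
      (∑ m ∈ Finset.Icc 1 (n - 1), ∑ k ∈ Finset.range (m + 1),
        a₁ m k * (Real.log R) ^ k * R ^ (-(m : ℝ))) + ρ₁ R)
    (h₂ : ∀ R ∈ Ici a, φ₂ R =
      (∑ m ∈ Finset.Icc 1 (n - 1), ∑ k ∈ Finset.range (m + 1),
        a₂ m k * (Real.log R) ^ k * R ^ (-(m : ℝ))) + ρ₂ R)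
    (h₃ : ∀ R ∈ Ici a, φ₃ R =
      (∑ m ∈ Finset.Icc 1 (n - 1), ∑ k ∈ Finset.range (m + 1),
        a₃ m k * (Real.log R) ^ k * R ^ (-(m : ℝ))) + ρ₃ R)
    (hρ₁ : ρ₁ =o[atTop] fun R : ℝ => R ^ (-((n : ℝ) - 1) - ε))
    (hρ₂ : ρ₂ =o[atTop] fun R : ℝ => R ^ (-((n : ℝ) - 1) - ε))
    (hρ₃ : ρ₃ =o[atTop] fun R : ℝ => R ^ (-((n : ℝ) - 1) - ε)) :
    ∃ Γ : ℕ → ℕ → ℝ, ∃ ε' > (0 : ℝ),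
      (fun R : ℝ => γ (φ₁ R, φ₂ R, φ₃ R) -
          ∑ m ∈ Finset.Icc 1 (n - 1), ∑ k ∈ Finset.range (m + 1),
            Γ m k * (Real.log R) ^ k * R ^ (-(m : ℝ)))
        =o[atTop] fun R : ℝ => R ^ (-((n : ℝ) - 1) - ε') :=
  analytic_inherits_polyhomogeneous_general n hn ε a hε γ hγ hγ0 φ₁ φ₂ φ₃ a₁ a₂ a₃ ρ₁ ρ₂ ρ₃ h₁ h₂ h₃
    hρ₁ hρ₂ hρ₃
end
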